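/- Let f, g be smooth functions on ℝ⁴ = ℝ³ₓ × ℝ_y and set S_{(f,g)} = ((∂g/∂y)∇f − (∂f/∂y)∇g) ∂/∂x ∧ ∂/∂x + (∇f × ∇g) ∂/∂x ∧ ∂/∂y, i.e. the pair (Ψ_S, Φ_S) = ((∂g/∂y)∇f − (∂f/∂y)∇g, ∇f × ∇g). Then (Ψ_S, Φ_S) satisfies the Jacobi equations Ψ_S·(rot Ψ_S + ∂Φ_S/∂y) = ∂(Ψ_S·Φ_S)/∂y and Φ_S × (rot Ψ_S + ∂Φ_S/∂y) + (div Φ_S)Ψ_S = ∇(Ψ_S·Φ_S), and moreover f and g are Casimir functions of S_{(f,g)}, i.e. S_{(f,g)}^#(df) = S_{(f,g)}^#(dg) = 0. -/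

import Mathlib

noncomputable section

abbrev V3 : Type := Fin 3 → ℝ
abbrev SF : Type := V3 → ℝ → ℝ
abbrev VF : Type := V3 → ℝ → V3

def dot (a b : V3) : ℝ := a 0 * b 0 + a 1 * b 1 + a 2 * b 2

def cross (a b : V3) : V3 :=
  ![a 1 * b 2 - a 2 * b 1, a 2 * b 0 - a 0 * b 2, a 0 * b 1 - a 1 * b 0]

def pdx (i : Fin 3) (f : SF) (x : V3) (y : ℝ) : ℝ :=
  fderiv ℝ (fun x' => f x' y) x (Pi.single i 1)

def pdy (f : SF) (x : V3) (y : ℝ) : ℝ := deriv (fun y' => f x y') y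

def grad (f : SF) (x : V3) (y : ℝ) : V3 := fun i => pdx i f x y

def vpdy (V : VF) (x : V3) (y : ℝ) : V3 := fun i => pdy (fun x y => V x y i) x y

def divx (V : VF) (x : V3) (y : ℝ) : ℝ := ∑ i : Fin 3, pdx i (fun x y => V x y i) x y

def rot (V : VF) (x : V3) (y : ℝ) : V3 :=
  ![pdx 1 (fun x y => V x y 2) x y - pdx 2 (fun x y => V x y 1) x y,
    pdx 2 (fun x y => V x y 0) x y - pdx 0 (fun x y => V x y 2) x y,
    pdx 0 (fun x y => V x y 1) x y - pdx 1 (fun x y => V x y 0) x y]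

def SmoothF (f : SF) : Prop := ContDiff ℝ (⊤ : ℕ∞) fun p : V3 × ℝ => f p.1 p.2
def SmoothV (V : VF) : Prop := ContDiff ℝ (⊤ : ℕ∞) fun p : V3 × ℝ => V p.1 p.2

def pbrak (Ψ Φ : VF) (f g : SF) : SF := fun x y =>
  dot (Ψ x y) (cross (grad f x y) (grad g x y)) +
    dot (Φ x y) (pdy f x y • grad g x y - pdy g x y • grad f x y)

def JacobiEqs (Ψ Φ : VF) : Prop :=
  (∀ x y, dot (Ψ x y) (rot Ψ x y + vpdy Φ x y) = pdy (fun x y => dot (Ψ x y) (Φ x y)) x y) ∧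
  (∀ x y, cross (Φ x y) (rot Ψ x y + vpdy Φ x y) + divx Φ x y • Ψ x y
      = grad (fun x y => dot (Ψ x y) (Φ x y)) x y)

def XHx (Ψ Φ : VF) (H : SF) : VF := fun x y =>
  cross (Ψ x y) (grad H x y) - pdy H x y • Φ x y

def XHy (Φ : VF) (H : SF) : SF := fun x y => dot (grad H x y) (Φ x y)

def Casimir (Ψ Φ : VF) (k : SF) : Prop :=
  ∀ x y, cross (Ψ x y) (grad k x y) - pdy k x y • Φ x y = 0 ∧ dot (grad k x y) (Φ x y) = 0

def LD (W : VF) (b : SF) (f : SF) : SF := fun x y =>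
  dot (W x y) (grad f x y) + b x y * pdy f x y

def PsiS (f g : SF) : VF := fun x y => pdy g x y • grad f x y - pdy f x y • grad g x y
def PhiS (f g : SF) : VF := fun x y => cross (grad f x y) (grad g x y)

/-! ### Auxiliary machinery -/

def uc (f : SF) : V3 × ℝ → ℝ := fun p => f p.1 p.2

def D1 (v : V3 × ℝ) (f : SF) : SF := fun x y => fderiv ℝ (uc f) (x, y) v

def D2 (v w : V3 × ℝ) (f : SF) : SF :=
  fun x y => fderiv ℝ (fun p => fderiv ℝ (uc f) p w) (x, y) v

section aux

variable {f : SF} {v w : V3 × ℝ} {i : Fin 3} {x : V3} {y : ℝ}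

lemma smoothF_iff : SmoothF f ↔ ContDiff ℝ (⊤ : ℕ∞) (uc f) := Iff.rfl

lemma diffx (hf : SmoothF f) (y : ℝ) : Differentiable ℝ (fun x' => f x' y) := by
  have : ContDiff ℝ (⊤ : ℕ∞) (fun x' : V3 => f x' y) :=
    (smoothF_iff.1 hf).comp (contDiff_id.prodMk contDiff_const)
  exact this.differentiable (by simp)

lemma diffy (hf : SmoothF f) (x : V3) : Differentiable ℝ (fun y' => f x y') := by
  have : ContDiff ℝ (⊤ : ℕ∞) (fun y' : ℝ => f x y') :=
    (smoothF_iff.1 hf).comp (contDiff_const.prodMk contDiff_id)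
  exact this.differentiable (by simp)

lemma pdx_eq (hf : SmoothF f) (i : Fin 3) (x : V3) (y : ℝ) :
    pdx i f x y = D1 (Pi.single i 1, 0) f x y := by
  have h1 : HasFDerivAt (uc f) (fderiv ℝ (uc f) (x, y)) (x, y) :=
    ((smoothF_iff.1 hf).differentiable (by simp) (x, y)).hasFDerivAt
  have h2 : HasFDerivAt (fun x' : V3 => (x', y)) (ContinuousLinearMap.inl ℝ V3 ℝ) x :=
    hasFDerivAt_prodMk_left x y
  have h3 : HasFDerivAt (fun x' : V3 => f x' y)
      ((fderiv ℝ (uc f) (x, y)).comp (ContinuousLinearMap.inl ℝ V3 ℝ)) x := by have := h1.comp x h2; exact this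
  simp only [pdx, h3.fderiv, D1]
  rfl

lemma pdy_eq (hf : SmoothF f) (x : V3) (y : ℝ) :
    pdy f x y = D1 (0, 1) f x y := by
  have h1 : HasFDerivAt (uc f) (fderiv ℝ (uc f) (x, y)) (x, y) :=
    ((smoothF_iff.1 hf).differentiable (by simp) (x, y)).hasFDerivAt
  have h2 : HasDerivAt (fun y' : ℝ => (x, y')) ((0 : V3), (1 : ℝ)) y :=
    (hasDerivAt_const y x).prodMk (hasDerivAt_id y)
  have h3 : HasDerivAt (fun y' : ℝ => f x y') (fderiv ℝ (uc f) (x, y) (0, 1)) y :=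
    h1.comp_hasDerivAt y h2
  simp only [pdy, h3.deriv, D1]

lemma uc_D1 : uc (D1 v f) = fun p => fderiv ℝ (uc f) p v := by
  funext p; simp [uc, D1]

lemma smooth_D1 (hf : SmoothF f) (v : V3 × ℝ) : SmoothF (D1 v f) := by
  rw [smoothF_iff, uc_D1]
  exact ((smoothF_iff.1 hf).fderiv_right (by simp)).clm_apply contDiff_const

lemma pdx_D1 (hf : SmoothF f) (i : Fin 3) (v : V3 × ℝ) (x : V3) (y : ℝ) :
    pdx i (D1 v f) x y = D2 (Pi.single i 1, 0) v f x y := by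
  rw [pdx_eq (smooth_D1 hf v)]
  simp only [D1, D2, uc_D1]

lemma pdy_D1 (hf : SmoothF f) (v : V3 × ℝ) (x : V3) (y : ℝ) :
    pdy (D1 v f) x y = D2 (0, 1) v f x y := by
  rw [pdy_eq (smooth_D1 hf v)]
  simp only [D1, D2, uc_D1]

lemma D2_symm (hf : SmoothF f) (v w : V3 × ℝ) (x : V3) (y : ℝ) :
    D2 v w f x y = D2 w v f x y := by
  have hdiff : ∀ p, HasFDerivAt (uc f) (fderiv ℝ (uc f) p) p := fun p =>
    ((smoothF_iff.1 hf).differentiable (by simp) p).hasFDerivAt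
  have h2 : HasFDerivAt (fderiv ℝ (uc f)) (fderiv ℝ (fderiv ℝ (uc f)) (x, y)) (x, y) :=
    ((((smoothF_iff.1 hf).fderiv_right (m := (⊤ : ℕ∞)) (by simp)).differentiable (by simp)) (x, y)).hasFDerivAt
  have hap : ∀ u a, fderiv ℝ (fun p => fderiv ℝ (uc f) p u) (x, y) a
      = fderiv ℝ (fderiv ℝ (uc f)) (x, y) a u := by
    intro u a
    have h3 : HasFDerivAt (fun p => (ContinuousLinearMap.apply ℝ ℝ u) (fderiv ℝ (uc f) p))
        (((ContinuousLinearMap.apply ℝ ℝ u)).comp (fderiv ℝ (fderiv ℝ (uc f)) (x, y))) (x, y) :=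
      (ContinuousLinearMap.apply ℝ ℝ u).hasFDerivAt.comp (x, y) h2
    rw [show (fun p => fderiv ℝ (uc f) p u)
        = fun p => (ContinuousLinearMap.apply ℝ ℝ u) (fderiv ℝ (uc f) p) from rfl, h3.fderiv]
    rfl
  simp only [D2, hap]
  exact second_derivative_symmetric hdiff h2 v w

variable {A B : SF}

lemma smoothF_mul (hA : SmoothF A) (hB : SmoothF B) :
    SmoothF (fun x y => A x y * B x y) := hA.mul hB

lemma smoothF_sub (hA : SmoothF A) (hB : SmoothF B) :
    SmoothF (fun x y => A x y - B x y) := hA.sub hB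

lemma smoothF_add (hA : SmoothF A) (hB : SmoothF B) :
    SmoothF (fun x y => A x y + B x y) := hA.add hB

lemma pdx_mul (hA : SmoothF A) (hB : SmoothF B) (i : Fin 3) (x : V3) (y : ℝ) :
    pdx i (fun x y => A x y * B x y) x y = pdx i A x y * B x y + A x y * pdx i B x y := by
  have ha : HasFDerivAt (fun x' => A x' y) (fderiv ℝ (fun x' => A x' y) x) x :=
    (diffx hA y x).hasFDerivAt
  have hb : HasFDerivAt (fun x' => B x' y) (fderiv ℝ (fun x' => B x' y) x) x :=
    (diffx hB y x).hasFDerivAt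
  have := (ha.fun_mul hb).fderiv
  simp only [pdx, this, ContinuousLinearMap.add_apply, ContinuousLinearMap.coe_smul',
    Pi.smul_apply, smul_eq_mul]
  ring

lemma pdx_sub (hA : SmoothF A) (hB : SmoothF B) (i : Fin 3) (x : V3) (y : ℝ) :
    pdx i (fun x y => A x y - B x y) x y = pdx i A x y - pdx i B x y := by
  have ha := diffx hA y x
  have hb := diffx hB y x
  simp only [pdx, fderiv_fun_sub ha hb, ContinuousLinearMap.coe_sub', Pi.sub_apply]

lemma pdx_add (hA : SmoothF A) (hB : SmoothF B) (i : Fin 3) (x : V3) (y : ℝ) :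
    pdx i (fun x y => A x y + B x y) x y = pdx i A x y + pdx i B x y := by
  have ha := diffx hA y x
  have hb := diffx hB y x
  simp only [pdx, fderiv_fun_add ha hb, ContinuousLinearMap.coe_add', Pi.add_apply]

lemma pdy_mul (hA : SmoothF A) (hB : SmoothF B) (x : V3) (y : ℝ) :
    pdy (fun x y => A x y * B x y) x y = pdy A x y * B x y + A x y * pdy B x y := by
  simp only [pdy, deriv_fun_mul (diffy hA x y) (diffy hB x y)]

lemma pdy_sub (hA : SmoothF A) (hB : SmoothF B) (x : V3) (y : ℝ) :
    pdy (fun x y => A x y - B x y) x y = pdy A x y - pdy B x y := by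
  simp only [pdy, deriv_fun_sub (diffy hA x y) (diffy hB x y)]

lemma pdy_add (hA : SmoothF A) (hB : SmoothF B) (x : V3) (y : ℝ) :
    pdy (fun x y => A x y + B x y) x y = pdy A x y + pdy B x y := by
  simp only [pdy, deriv_fun_add (diffy hA x y) (diffy hB x y)]

end aux

set_option maxHeartbeats 2000000 in
theorem stmt6 (f g : SF) (hf : SmoothF f) (hg : SmoothF g) :
    JacobiEqs (PsiS f g) (PhiS f g) ∧
    Casimir (PsiS f g) (PhiS f g) f ∧ Casimir (PsiS f g) (PhiS f g) g := by
  have hDf : ∀ v, SmoothF (D1 v f) := smooth_D1 hf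
  have hDg : ∀ v, SmoothF (D1 v g) := smooth_D1 hg
  -- symmetry canonicalization lemmas
  refine ⟨⟨?_, ?_⟩, ?_, ?_⟩
  · intro x y
    simp only [PsiS, PhiS, dot, cross, grad, rot, vpdy, divx, Pi.add_apply, Pi.sub_apply,
      Pi.smul_apply, smul_eq_mul, Fin.sum_univ_three, Matrix.cons_val_zero, Matrix.cons_val_one,
      Matrix.head_cons, Matrix.cons_val_two, Matrix.tail_cons, Fin.zero_eta, Fin.mk_one, Fin.reduceFinMk]
    simp only [pdx_eq hf, pdx_eq hg, pdy_eq hf, pdy_eq hg]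
    simp (maxDischargeDepth := 12) only [pdx_mul, pdx_sub, pdx_add, pdy_mul, pdy_sub, pdy_add,
      pdx_D1 hf, pdx_D1 hg, pdy_D1 hf, pdy_D1 hg,
      smoothF_mul, smoothF_sub, smoothF_add, hDf, hDg]
    simp only [D2_symm hf (Pi.single 1 1, 0) (Pi.single 0 1, 0), D2_symm hf (Pi.single 2 1, 0) (Pi.single 0 1, 0),
      D2_symm hf (Pi.single 2 1, 0) (Pi.single 1 1, 0), D2_symm hf ((0 : V3), (1 : ℝ)) (Pi.single 0 1, 0),
      D2_symm hf ((0 : V3), (1 : ℝ)) (Pi.single 1 1, 0), D2_symm hf ((0 : V3), (1 : ℝ)) (Pi.single 2 1, 0),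
      D2_symm hg (Pi.single 1 1, 0) (Pi.single 0 1, 0), D2_symm hg (Pi.single 2 1, 0) (Pi.single 0 1, 0),
      D2_symm hg (Pi.single 2 1, 0) (Pi.single 1 1, 0), D2_symm hg ((0 : V3), (1 : ℝ)) (Pi.single 0 1, 0),
      D2_symm hg ((0 : V3), (1 : ℝ)) (Pi.single 1 1, 0), D2_symm hg ((0 : V3), (1 : ℝ)) (Pi.single 2 1, 0)]
    ring
  · intro x y
    funext i
    fin_cases i <;>
    · simp only [PsiS, PhiS, dot, cross, grad, rot, vpdy, divx, Pi.add_apply, Pi.sub_apply,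
        Pi.smul_apply, smul_eq_mul, Fin.sum_univ_three, Matrix.cons_val_zero, Matrix.cons_val_one,
        Matrix.head_cons, Matrix.cons_val_two, Matrix.tail_cons, Fin.zero_eta, Fin.mk_one, Fin.reduceFinMk]
      simp only [pdx_eq hf, pdx_eq hg, pdy_eq hf, pdy_eq hg]
      simp (maxDischargeDepth := 12) only [pdx_mul, pdx_sub, pdx_add, pdy_mul, pdy_sub, pdy_add,
        pdx_D1 hf, pdx_D1 hg, pdy_D1 hf, pdy_D1 hg,
        smoothF_mul, smoothF_sub, smoothF_add, hDf, hDg]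
      simp only [D2_symm hf (Pi.single 1 1, 0) (Pi.single 0 1, 0), D2_symm hf (Pi.single 2 1, 0) (Pi.single 0 1, 0),
        D2_symm hf (Pi.single 2 1, 0) (Pi.single 1 1, 0), D2_symm hf ((0 : V3), (1 : ℝ)) (Pi.single 0 1, 0),
        D2_symm hf ((0 : V3), (1 : ℝ)) (Pi.single 1 1, 0), D2_symm hf ((0 : V3), (1 : ℝ)) (Pi.single 2 1, 0),
        D2_symm hg (Pi.single 1 1, 0) (Pi.single 0 1, 0), D2_symm hg (Pi.single 2 1, 0) (Pi.single 0 1, 0),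
        D2_symm hg (Pi.single 2 1, 0) (Pi.single 1 1, 0), D2_symm hg ((0 : V3), (1 : ℝ)) (Pi.single 0 1, 0),
        D2_symm hg ((0 : V3), (1 : ℝ)) (Pi.single 1 1, 0), D2_symm hg ((0 : V3), (1 : ℝ)) (Pi.single 2 1, 0)]
      ring
  · intro x y
    constructor
    · funext i
      fin_cases i <;>
      · simp only [PsiS, PhiS, cross, grad, Pi.sub_apply, Pi.smul_apply, smul_eq_mul,
          Matrix.cons_val_zero, Matrix.cons_val_one, Matrix.head_cons, Matrix.cons_val_two,
          Matrix.tail_cons, Pi.zero_apply, Fin.zero_eta, Fin.mk_one, Fin.reduceFinMk]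
        ring
    · simp only [PsiS, PhiS, dot, cross, grad, Matrix.cons_val_zero, Matrix.cons_val_one,
        Matrix.head_cons, Matrix.cons_val_two, Matrix.tail_cons, Fin.zero_eta, Fin.mk_one, Fin.reduceFinMk]
      ring
  · intro x y
    constructor
    · funext i
      fin_cases i <;>
      · simp only [PsiS, PhiS, cross, grad, Pi.sub_apply, Pi.smul_apply, smul_eq_mul,
          Matrix.cons_val_zero, Matrix.cons_val_one, Matrix.head_cons, Matrix.cons_val_two,
          Matrix.tail_cons, Pi.zero_apply, Fin.zero_eta, Fin.mk_one, Fin.reduceFinMk]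
        ring
    · simp only [PsiS, PhiS, dot, cross, grad, Matrix.cons_val_zero, Matrix.cons_val_one,
        Matrix.head_cons, Matrix.cons_val_two, Matrix.tail_cons, Fin.zero_eta, Fin.mk_one, Fin.reduceFinMk]
      ring
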